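/- arXiv:1412.0748 — 8 statements merged into one kernel-verified Lean document; each statement's English description precedes it below -/
import Mathlib

section
/- Let f, g₁, g₂ be continuous ρ-periodic functions with f ≥ 0, g₁(t) ≥ g₂(t) for all t, and ∫₀^ρ g₂(s) ds > 0. If w₁ and w₂ are the unique ρ-periodic solutions of w' = f(t) - g₁(t)w and w' = f(t) - g₂(t)w respectively, then w₁(t) ≤ w₂(t) for all t ∈ ℝ₊. -/
/-!
Multiplying by the integrating factor `exp (∫₀ᵗ g)` turns a differential inequality
`v' ≥ -g v` into monotonicity. For a `ρ`-periodic `v` this forces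
`exp (∫₀^ρ g) · v t ≥ v t`, hence `v ≥ 0` once `∫₀^ρ g > 0`. This applies to `w₁` (as `f ≥ 0`),
and then to `w₂ - w₁`, which satisfies `(w₂ - w₁)' = -g₂ (w₂ - w₁) + (g₁ - g₂) w₁`.
-/

open Real

theorem monotone_exp_integral_mul_of_neg_mul_le_deriv {g v v' : ℝ → ℝ} (hg : Continuous g)
    (hv : ∀ t, HasDerivAt v (v' t) t) (hineq : ∀ t, -(g t * v t) ≤ v' t) :
    Monotone fun t => exp (∫ s in (0:ℝ)..t, g s) * v t := by
  have hF : ∀ t, HasDerivAt (fun t => exp (∫ s in (0:ℝ)..t, g s) * v t)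
      (exp (∫ s in (0:ℝ)..t, g s) * (g t * v t + v' t)) t := fun t => by
    have hH := intervalIntegral.integral_hasDerivAt_right (hg.intervalIntegrable 0 t)
      hg.aestronglyMeasurable.stronglyMeasurableAtFilter hg.continuousAt
    exact (hH.exp.mul (hv t)).congr_deriv (by ring)
  refine monotone_of_deriv_nonneg (fun t => (hF t).differentiableAt) fun t => ?_
  rw [(hF t).deriv]
  have : 0 ≤ g t * v t + v' t := by linarith [hineq t]
  positivity

theorem nonneg_of_periodic_of_neg_mul_le_deriv {ρ : ℝ} (hρ : 0 ≤ ρ) {g v v' : ℝ → ℝ}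
    (hg : Continuous g) (hgp : Function.Periodic g ρ) (hgint : 0 < ∫ s in (0:ℝ)..ρ, g s)
    (hv : ∀ t, HasDerivAt v (v' t) t) (hineq : ∀ t, -(g t * v t) ≤ v' t)
    (hvp : Function.Periodic v ρ) (t : ℝ) : 0 ≤ v t := by
  have hmono := monotone_exp_integral_mul_of_neg_mul_le_deriv hg hv hineq
    (le_add_of_nonneg_right hρ : t ≤ t + ρ)
  have hshift : ∫ s in (0:ℝ)..t + ρ, g s = (∫ s in (0:ℝ)..t, g s) + ∫ s in (0:ℝ)..ρ, g s := by
    simpa using hgp.intervalIntegral_add_eq_add 0 t fun a b => hg.intervalIntegrable a b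
  have hexp : 1 < exp (∫ s in (0:ℝ)..ρ, g s) := one_lt_exp_iff.2 hgint
  simp only [hshift, hvp t, exp_add, mul_assoc] at hmono
  have hv_le : v t ≤ exp (∫ s in (0:ℝ)..ρ, g s) * v t := le_of_mul_le_mul_left hmono (exp_pos _)
  nlinarith

theorem periodic_solution_linear_ode_comparison_general
    (ρ : ℝ) (hρ : 0 < ρ) (f g₁ g₂ : ℝ → ℝ)
    (hg₁ : Continuous g₁) (hg₂ : Continuous g₂)
    (hg₁p : Function.Periodic g₁ ρ)
    (hg₂p : Function.Periodic g₂ ρ)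
    (hfnn : ∀ t, 0 ≤ f t)
    (hgle : ∀ t, g₂ t ≤ g₁ t)
    (hg₂int : 0 < ∫ s in (0:ℝ)..ρ, g₂ s)
    (w₁ w₂ : ℝ → ℝ)
    (hw₁ : ∀ t, HasDerivAt w₁ (f t - g₁ t * w₁ t) t)
    (hw₂ : ∀ t, HasDerivAt w₂ (f t - g₂ t * w₂ t) t)
    (hp₁ : Function.Periodic w₁ ρ) (hp₂ : Function.Periodic w₂ ρ) :
    ∀ t, 0 ≤ t → w₁ t ≤ w₂ t := by
  have hg₁int : 0 < ∫ s in (0:ℝ)..ρ, g₁ s :=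
    hg₂int.trans_le <| intervalIntegral.integral_mono_on hρ.le (hg₂.intervalIntegrable 0 ρ)
      (hg₁.intervalIntegrable 0 ρ) fun s _ => hgle s
  have hw₁nn : ∀ t, 0 ≤ w₁ t :=
    nonneg_of_periodic_of_neg_mul_le_deriv hρ.le hg₁ hg₁p hg₁int hw₁
      (fun t => by linarith [hfnn t]) hp₁
  have hdiff : ∀ t, 0 ≤ w₂ t - w₁ t :=
    nonneg_of_periodic_of_neg_mul_le_deriv hρ.le hg₂ hg₂p hg₂int
      (fun t => (hw₂ t).sub (hw₁ t))
      (fun t => by nlinarith [mul_le_mul_of_nonneg_right (hgle t) (hw₁nn t)])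
      (hp₂.sub hp₁)
  exact fun t _ => sub_nonneg.1 (hdiff t)

/-- Comparison of ρ-periodic solutions of w' = f - g₁·w and w' = f - g₂·w when g₁ ≥ g₂. -/
theorem periodic_solution_linear_ode_comparison
    (ρ : ℝ) (hρ : 0 < ρ) (f g₁ g₂ : ℝ → ℝ)
    (hf : Continuous f) (hg₁ : Continuous g₁) (hg₂ : Continuous g₂)
    (hfp : Function.Periodic f ρ) (hg₁p : Function.Periodic g₁ ρ)
    (hg₂p : Function.Periodic g₂ ρ)
    (hfnn : ∀ t, 0 ≤ f t)
    (hgle : ∀ t, g₂ t ≤ g₁ t)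
    (hg₂int : 0 < ∫ s in (0:ℝ)..ρ, g₂ s)
    (w₁ w₂ : ℝ → ℝ)
    (hw₁ : ∀ t, HasDerivAt w₁ (f t - g₁ t * w₁ t) t)
    (hw₂ : ∀ t, HasDerivAt w₂ (f t - g₂ t * w₂ t) t)
    (hp₁ : Function.Periodic w₁ ρ) (hp₂ : Function.Periodic w₂ ρ) :
    ∀ t, 0 ≤ t → w₁ t ≤ w₂ t :=
  periodic_solution_linear_ode_comparison_general ρ hρ f g₁ g₂ hg₁ hg₂ hg₁p hg₂p hfnn hgle hg₂int w₁
    w₂ hw₁ hw₂ hp₁ hp₂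
end

section
/- Let f, g be continuous ρ-periodic functions with f(t) > 0 for all t and ∫₀^ρ g(s) ds > 0. Then the Bernoulli equation v' = g(t)v - f(t)v² has a unique strictly positive ρ-periodic solution, given by v(t) = [v(0)⁻¹ exp(-∫₀^t g) + ∫₀^t exp(-∫ₛ^t g) f(s) ds]⁻¹ with v(0) = (1 - exp(-∫₀^ρ g))/(∫₀^ρ exp(-∫ₛ^ρ g) f(s) ds). -/
/-!
With `u = 1 / v` the Bernoulli equation becomes the linear equation `u' = f - g u`, whose
solutions are `linearSolution g f c` (variation of constants). Two solutions differ by a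
multiple of `exp (-∫₀ᵗ g)`, which shrinks by the factor `exp (-∫₀^ρ g) < 1` over a period;
hence at most one solution is `ρ`-periodic, and a solution with `u ρ = u 0` is periodic.
The condition `u ρ = u 0` singles out `c = 1 / v0`. This solution is positive on `[0, ρ)`
because `f > 0`, hence positive everywhere by periodicity, so its reciprocal is `v`.
-/

open Real intervalIntegral Function

section LinearODE

variable {f g : ℝ → ℝ}

theorem eq_mul_exp_neg_integral_of_hasDerivAt (hg : Continuous g) {d : ℝ → ℝ}
    (hd : ∀ t, HasDerivAt d (-(g t * d t)) t) (t : ℝ) :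
    d t = d 0 * exp (-∫ s in 0..t, g s) := by
  have hG : ∀ t, HasDerivAt (fun t => ∫ s in 0..t, g s) (g t) t :=
    fun t => (hg.integral_hasStrictDerivAt 0 t).hasDerivAt
  have hconst : ∀ t, HasDerivAt (fun t => d t * exp (∫ s in 0..t, g s)) 0 t := fun t =>
    ((hd t).mul (hG t).exp).congr_deriv (by ring)
  have h := is_const_of_deriv_eq_zero (fun t => (hconst t).differentiableAt)
    (fun t => (hconst t).deriv) t 0
  rw [integral_same, exp_zero, mul_one] at h
  rw [exp_neg, ← h, mul_inv_cancel_right₀ (exp_ne_zero _)]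

theorem periodic_of_hasDerivAt_sub_mul (hg : Continuous g) {ρ : ℝ} (hfp : Periodic f ρ)
    (hgp : Periodic g ρ) {w : ℝ → ℝ} (hw : ∀ t, HasDerivAt w (f t - g t * w t) t)
    (hρ : w ρ = w 0) : Periodic w ρ := by
  have hshift : ∀ t, HasDerivAt (fun t => w (t + ρ)) (f t - g t * w (t + ρ)) t := fun t => by
    simpa only [hfp t, hgp t] using (hw (t + ρ)).comp_add_const t ρ
  have hdiff := eq_mul_exp_neg_integral_of_hasDerivAt hg (d := fun t => w (t + ρ) - w t)
    fun t => ((hshift t).sub (hw t)).congr_deriv (by ring)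
  intro t
  simpa [hρ, sub_eq_zero] using hdiff t

theorem eq_of_hasDerivAt_sub_mul (hg : Continuous g) {ρ : ℝ} (hG : ∫ s in 0..ρ, g s ≠ 0)
    {u w : ℝ → ℝ} (hu : ∀ t, HasDerivAt u (f t - g t * u t) t)
    (hw : ∀ t, HasDerivAt w (f t - g t * w t) t) (huρ : u ρ = u 0) (hwρ : w ρ = w 0) :
    u = w := by
  have hdiff := eq_mul_exp_neg_integral_of_hasDerivAt hg (d := fun t => u t - w t)
    fun t => ((hu t).sub (hw t)).congr_deriv (by ring)
  have hexp : exp (-∫ s in 0..ρ, g s) ≠ 1 := by simpa using hG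
  have h0 : u 0 - w 0 = 0 := by
    have hρ := hdiff ρ
    rw [huρ, hwρ] at hρ
    exact (mul_right_eq_self₀.1 hρ.symm).resolve_left hexp
  funext t
  simpa [h0, sub_eq_zero] using hdiff t

noncomputable def linearSolution (g f : ℝ → ℝ) (c t : ℝ) : ℝ :=
  c * exp (-∫ s in 0..t, g s) + ∫ s in 0..t, exp (-∫ s' in s..t, g s') * f s

theorem linearSolution_zero (c : ℝ) : linearSolution g f c 0 = c := by
  simp [linearSolution]

theorem linearSolution_eq_exp_mul (hg : Continuous g) (c t : ℝ) :
    linearSolution g f c t =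
      exp (-∫ s in 0..t, g s) * (c + ∫ s in 0..t, exp (∫ s' in 0..s, g s') * f s) := by
  have hsplit : ∀ s, ∫ s' in s..t, g s' = (∫ s' in 0..t, g s') - ∫ s' in 0..s, g s' :=
    fun s => (integral_interval_sub_left (hg.intervalIntegrable _ _)
      (hg.intervalIntegrable _ _)).symm
  rw [linearSolution, mul_add, ← integral_const_mul]
  congr 1
  · ring
  · refine integral_congr fun s _ => ?_
    rw [hsplit, neg_sub, sub_eq_neg_add, exp_add]
    ring

theorem hasDerivAt_linearSolution (hg : Continuous g) (hf : Continuous f) (c t : ℝ) :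
    HasDerivAt (linearSolution g f c) (f t - g t * linearSolution g f c t) t := by
  have hG : ∀ t, HasDerivAt (fun t => ∫ s in 0..t, g s) (g t) t :=
    fun t => (hg.integral_hasStrictDerivAt 0 t).hasDerivAt
  have hF : HasDerivAt (fun t => c + ∫ s in 0..t, exp (∫ s' in 0..s, g s') * f s)
      (exp (∫ s' in 0..t, g s') * f t) t :=
    (((continuous_primitive (fun _ _ => hg.intervalIntegrable _ _) 0).rexp.mul hf
      ).integral_hasStrictDerivAt 0 t).hasDerivAt.const_add c
  have hE : HasDerivAt (fun t => exp (-∫ s in 0..t, g s)) (exp (-∫ s in 0..t, g s) * -g t) t :=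
    (hG t).neg.exp
  rw [funext (linearSolution_eq_exp_mul hg c)]
  refine (hE.mul hF).congr_deriv ?_
  rw [mul_left_comm _ (exp _), ← mul_assoc, ← exp_add, add_neg_cancel, exp_zero]
  ring

theorem linearSolution_pos (hg : Continuous g) (hf : Continuous f) (hfpos : ∀ t, 0 < f t)
    {c t : ℝ} (hc : 0 ≤ c) (ht : 0 < t) : 0 < linearSolution g f c t := by
  rw [linearSolution_eq_exp_mul hg]
  refine mul_pos (exp_pos _) (add_pos_of_nonneg_of_pos hc ?_)
  refine intervalIntegral_pos_of_pos_on (Continuous.intervalIntegrable ?_ _ _)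
    (fun s _ => mul_pos (exp_pos _) (hfpos s)) ht
  exact (continuous_primitive (fun _ _ => hg.intervalIntegrable _ _) 0).rexp.mul hf

theorem linearSolution_div_one_sub_exp_self {ρ : ℝ} (hG : ∫ s in 0..ρ, g s ≠ 0) :
    linearSolution g f (linearSolution g f 0 ρ / (1 - exp (-∫ s in 0..ρ, g s))) ρ =
      linearSolution g f 0 ρ / (1 - exp (-∫ s in 0..ρ, g s)) := by
  have hexp : 1 - exp (-∫ s in 0..ρ, g s) ≠ 0 :=
    sub_ne_zero.2 (Ne.symm (by simpa using hG))
  simp only [linearSolution, zero_mul, zero_add]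
  field_simp
  ring

end LinearODE

theorem HasDerivAt.inv_bernoulli {u : ℝ → ℝ} {a b t : ℝ}
    (hu : HasDerivAt u (a * u t - b * u t ^ 2) t) (h0 : u t ≠ 0) :
    HasDerivAt (fun s => (u s)⁻¹) (b - a * (u t)⁻¹) t :=
  (hu.inv h0).congr_deriv (by field_simp; ring)

theorem HasDerivAt.inv_linear {w : ℝ → ℝ} {a b t : ℝ}
    (hw : HasDerivAt w (b - a * w t) t) (h0 : w t ≠ 0) :
    HasDerivAt (fun s => (w s)⁻¹) (a * (w t)⁻¹ - b * (w t)⁻¹ ^ 2) t :=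
  (hw.inv h0).congr_deriv (by field_simp; ring)

/-- The Bernoulli equation v' = g·v - f·v² has a unique strictly positive ρ-periodic
solution, given by the stated explicit formula. -/
theorem bernoulli_periodic_solution
    (ρ : ℝ) (hρ : 0 < ρ) (f g : ℝ → ℝ)
    (hf : Continuous f) (hg : Continuous g)
    (hfp : Function.Periodic f ρ) (hgp : Function.Periodic g ρ)
    (hfpos : ∀ t, 0 < f t)
    (hgint : 0 < ∫ s in (0:ℝ)..ρ, g s)
    (v0 : ℝ)
    (hv0 : v0 = (1 - Real.exp (-(∫ s in (0:ℝ)..ρ, g s))) /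
      (∫ s in (0:ℝ)..ρ, Real.exp (-(∫ s' in s..ρ, g s')) * f s))
    (v : ℝ → ℝ)
    (hv : ∀ t, v t = (v0⁻¹ * Real.exp (-(∫ s in (0:ℝ)..t, g s)) +
      ∫ s in (0:ℝ)..t, Real.exp (-(∫ s' in s..t, g s')) * f s)⁻¹) :
    (∀ t, 0 < v t) ∧ Function.Periodic v ρ ∧
    (∀ t, HasDerivAt v (g t * v t - f t * (v t) ^ 2) t) ∧
    (∀ u : ℝ → ℝ, (∀ t, 0 < u t) → Function.Periodic u ρ →
      (∀ t, HasDerivAt u (g t * u t - f t * (u t) ^ 2) t) → u = v) := by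
  set W := linearSolution g f v0⁻¹
  have hG : ∫ s in 0..ρ, g s ≠ 0 := hgint.ne'
  have hW' : ∀ t, HasDerivAt W (f t - g t * W t) t := hasDerivAt_linearSolution hg hf _
  have hc : v0⁻¹ = linearSolution g f 0 ρ / (1 - exp (-∫ s in 0..ρ, g s)) := by
    rw [hv0, inv_div]
    simp [linearSolution]
  have hcpos : 0 < v0⁻¹ := by
    rw [hc]
    exact div_pos (linearSolution_pos hg hf hfpos le_rfl hρ)
      (sub_pos.2 (exp_lt_one_iff.2 (neg_lt_zero.2 hgint)))
  have hW0 : W 0 = v0⁻¹ := linearSolution_zero _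
  have hWρ : W ρ = W 0 := by
    rw [hW0]
    change linearSolution g f v0⁻¹ ρ = v0⁻¹
    rw [hc]
    exact linearSolution_div_one_sub_exp_self hG
  have hWper : Periodic W ρ := periodic_of_hasDerivAt_sub_mul hg hfp hgp hW' hWρ
  have hWpos : ∀ t, 0 < W t := fun t => by
    obtain ⟨y, ⟨hy0, -⟩, hy⟩ := hWper.exists_mem_Ico₀ hρ t
    rw [hy]
    rcases hy0.eq_or_lt with rfl | hy0
    · rwa [hW0]
    · exact linearSolution_pos hg hf hfpos hcpos.le hy0
  obtain rfl : v = fun t => (W t)⁻¹ := funext fun t => by rw [hv t]; rfl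
  refine ⟨fun t => inv_pos.2 (hWpos t), hWper.comp _,
    fun t => (hW' t).inv_linear (hWpos t).ne', fun u hupos huper hu' => ?_⟩
  have huW : (fun t => (u t)⁻¹) = W := eq_of_hasDerivAt_sub_mul hg hG
    (fun t => (hu' t).inv_bernoulli (hupos t).ne') hW' (huper.comp _).eq hWρ
  simp only [← huW, inv_inv]
end

section
/- Let f, g₁, g₂ be continuous ρ-periodic functions with f > 0, g₁(t) ≥ g₂(t) for all t, and ∫₀^ρ g₂ > 0. If v₁, v₂ are the strictly positive ρ-periodic solutions of v' = g₁(t)v - f(t)v² and v' = g₂(t)v - f(t)v² respectively, then v₁(t) ≥ v₂(t) for all t. -/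
/-!
The quotient `u = v₂ / v₁` is continuous and `ρ`-periodic, so it attains its maximum at some
`t₀`, where `u' t₀ = 0`. Along the two equations the numerator of `u'` is
`v₁ v₂ ((g₂ - g₁) + f (v₁ - v₂))`, which is negative wherever `v₁ < v₂`; hence `u t₀ ≤ 1`.
-/

open Function Set

theorem Function.Periodic.exists_forall_le_of_continuous {α : Type*} [TopologicalSpace α]
    [LinearOrder α] [ClosedIciTopology α] {u : ℝ → α} {c : ℝ} (hp : Periodic u c) (hc : c ≠ 0)
    (hu : Continuous u) : ∃ t₀, ∀ t, u t ≤ u t₀ := by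
  obtain ⟨_, ⟨t₀, rfl⟩, hmax⟩ :=
    (hp.compact_of_continuous hc hu).exists_isGreatest (range_nonempty u)
  exact ⟨t₀, fun t => hmax ⟨t, rfl⟩⟩

theorem Function.Periodic.le_of_hasDerivAt_ne_zero {u u' : ℝ → ℝ} {c a : ℝ} (hp : Periodic u c)
    (hc : c ≠ 0) (hu : ∀ t, HasDerivAt u (u' t) t) (hu' : ∀ t, a < u t → u' t ≠ 0) (t : ℝ) :
    u t ≤ a := by
  have hcont : Continuous u := continuous_iff_continuousAt.2 fun t => (hu t).continuousAt
  obtain ⟨t₀, hmax⟩ := hp.exists_forall_le_of_continuous hc hcont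
  by_contra! ht
  have hcrit : IsLocalMax u t₀ := Filter.Eventually.of_forall hmax
  exact hu' t₀ (ht.trans_le (hmax t)) (hcrit.hasDerivAt_eq_zero (hu t₀))

theorem bernoulli_quotient_deriv_neg {f g₁ g₂ v₁ v₂ : ℝ} (hf : 0 < f) (hg : g₂ ≤ g₁)
    (hv₁ : 0 < v₁) (hv₂ : 0 < v₂) (hlt : v₁ < v₂) :
    ((g₂ * v₂ - f * v₂ ^ 2) * v₁ - v₂ * (g₁ * v₁ - f * v₁ ^ 2)) / v₁ ^ 2 < 0 := by
  have hnum : (g₂ * v₂ - f * v₂ ^ 2) * v₁ - v₂ * (g₁ * v₁ - f * v₁ ^ 2)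
      = v₁ * v₂ * ((g₂ - g₁) + f * (v₁ - v₂)) := by ring
  rw [hnum]
  have hneg : (g₂ - g₁) + f * (v₁ - v₂) < 0 := by nlinarith
  exact div_neg_of_neg_of_pos (mul_neg_of_pos_of_neg (mul_pos hv₁ hv₂) hneg) (by positivity)

theorem bernoulli_periodic_solution_comparison_general
    (ρ : ℝ) (hρ : 0 < ρ) (f g₁ g₂ : ℝ → ℝ)
    (hfpos : ∀ t, 0 < f t)
    (hgle : ∀ t, g₂ t ≤ g₁ t)
    (v₁ v₂ : ℝ → ℝ)
    (hv₁pos : ∀ t, 0 < v₁ t) (hv₂pos : ∀ t, 0 < v₂ t)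
    (hv₁ : ∀ t, HasDerivAt v₁ (g₁ t * v₁ t - f t * (v₁ t) ^ 2) t)
    (hv₂ : ∀ t, HasDerivAt v₂ (g₂ t * v₂ t - f t * (v₂ t) ^ 2) t)
    (hp₁ : Function.Periodic v₁ ρ) (hp₂ : Function.Periodic v₂ ρ) :
    ∀ t, v₂ t ≤ v₁ t := by
  have hquot_periodic : Periodic (fun t => v₂ t / v₁ t) ρ := hp₂.div hp₁
  have hquot_le_one := hquot_periodic.le_of_hasDerivAt_ne_zero hρ.ne'
    (fun t => (hv₂ t).div (hv₁ t) (hv₁pos t).ne') fun t ht => by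
      refine (bernoulli_quotient_deriv_neg (hfpos t) (hgle t) (hv₁pos t) (hv₂pos t) ?_).ne
      exact (one_lt_div (hv₁pos t)).1 ht
  exact fun t => (div_le_one (hv₁pos t)).1 (hquot_le_one t)

/-- Comparison of strictly positive ρ-periodic solutions of Bernoulli equations
v' = g₁·v - f·v² and v' = g₂·v - f·v² when g₁ ≥ g₂. -/
theorem bernoulli_periodic_solution_comparison
    (ρ : ℝ) (hρ : 0 < ρ) (f g₁ g₂ : ℝ → ℝ)
    (hf : Continuous f) (hg₁ : Continuous g₁) (hg₂ : Continuous g₂)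
    (hfp : Function.Periodic f ρ) (hg₁p : Function.Periodic g₁ ρ)
    (hg₂p : Function.Periodic g₂ ρ)
    (hfpos : ∀ t, 0 < f t)
    (hgle : ∀ t, g₂ t ≤ g₁ t)
    (hg₂int : 0 < ∫ s in (0:ℝ)..ρ, g₂ s)
    (v₁ v₂ : ℝ → ℝ)
    (hv₁pos : ∀ t, 0 < v₁ t) (hv₂pos : ∀ t, 0 < v₂ t)
    (hv₁ : ∀ t, HasDerivAt v₁ (g₁ t * v₁ t - f t * (v₁ t) ^ 2) t)
    (hv₂ : ∀ t, HasDerivAt v₂ (g₂ t * v₂ t - f t * (v₂ t) ^ 2) t)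
    (hp₁ : Function.Periodic v₁ ρ) (hp₂ : Function.Periodic v₂ ρ) :
    ∀ t, v₂ t ≤ v₁ t :=
  bernoulli_periodic_solution_comparison_general ρ hρ f g₁ g₂ hfpos hgle v₁ v₂ hv₁pos hv₂pos hv₁ hv₂
    hp₁ hp₂
end

section
/- Consider the planar system x₁' = β₂x₁(1 - x₁ - δ₂x₂), x₂' = β₄[i(t) - x₂ - δ₄x₁x₂] with positive parameters and i continuous ρ-periodic with (1/ρ)∫₀^ρ i = 1. If a strictly positive ρ-periodic solution exists, then either δ₂ < 1, or both 1 ≤ δ₂ ≤ (1+δ₄)²/(4δ₄) and δ₄ > 1 hold. In particular no strictly positive ρ-periodic solution exists when δ₂ > (1+δ₄)²/(4δ₄). -/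
/-!
Along a positive solution the function
`V = -(δ₄/β₂) x₁ + (δ₂/β₄) x₂ - (1/β₂) log x₁` satisfies
`V' = δ₄ x₁² + (1 - δ₄) x₁ + δ₂ i - 1`. Integrating over a period, where `V` returns to
its initial value and `i` has mean `1`, shows that `δ₄ x₁² + (1 - δ₄) x₁` has mean `1 - δ₂`.
This quadratic in `x₁` is bounded below by `-(δ₄ - 1)²/(4δ₄)`, which gives
`δ₂ ≤ (1 + δ₄)²/(4δ₄)`, and it is positive for `x₁ > 0` when `δ₄ ≤ 1`, which forces `δ₂ < 1`.
-/

open intervalIntegral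
open MeasureTheory (volume)

theorem integral_eq_zero_of_hasDerivAt_of_periodic {V f : ℝ → ℝ} {ρ : ℝ}
    (hV : Function.Periodic V ρ) (hderiv : ∀ t, HasDerivAt V (f t) t) (a : ℝ)
    (hf : IntervalIntegrable f volume a (a + ρ)) :
    ∫ t in a..a + ρ, f t = 0 := by
  rw [integral_eq_sub_of_hasDerivAt (fun t _ => hderiv t) hf, hV, sub_self]

theorem neg_sq_sub_one_div_le_quadratic {δ : ℝ} (hδ : 0 < δ) (x : ℝ) :
    -((δ - 1) ^ 2 / (4 * δ)) ≤ δ * x ^ 2 + (1 - δ) * x := by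
  rw [neg_le, le_div_iff₀ (by positivity)]
  nlinarith [sq_nonneg (2 * δ * x - (δ - 1))]

theorem quadratic_pos_of_le_one {δ x : ℝ} (hδ : 0 < δ) (hδ₁ : δ ≤ 1) (hx : 0 < x) :
    0 < δ * x ^ 2 + (1 - δ) * x := by
  have : 0 ≤ (1 - δ) * x := mul_nonneg (by linarith) hx.le
  have : 0 < δ * x ^ 2 := by positivity
  linarith

theorem parameter_conditions_of_integral_quadratic_eq {δ₂ δ₄ ρ : ℝ} (hδ₄ : 0 < δ₄)
    (hρ : 0 < ρ) {x : ℝ → ℝ} (hx : ∀ t, 0 < x t)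
    (hint : IntervalIntegrable (fun t => δ₄ * x t ^ 2 + (1 - δ₄) * x t) volume 0 ρ)
    (hmean : ∫ t in (0 : ℝ)..ρ, (δ₄ * x t ^ 2 + (1 - δ₄) * x t) = ρ * (1 - δ₂)) :
    δ₂ < 1 ∨ (1 ≤ δ₂ ∧ δ₂ ≤ (1 + δ₄) ^ 2 / (4 * δ₄) ∧ 1 < δ₄) := by
  have hupper : δ₂ ≤ (1 + δ₄) ^ 2 / (4 * δ₄) := by
    have hlower : ρ * -((δ₄ - 1) ^ 2 / (4 * δ₄)) ≤ ρ * (1 - δ₂) := by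
      have h := integral_mono_on hρ.le intervalIntegrable_const hint
        fun t _ => neg_sq_sub_one_div_le_quadratic hδ₄ (x t)
      rwa [integral_const, sub_zero, smul_eq_mul, hmean] at h
    have hsq : (1 + δ₄) ^ 2 / (4 * δ₄) = (δ₄ - 1) ^ 2 / (4 * δ₄) + 1 := by
      field_simp
      ring
    rw [hsq]
    linarith [le_of_mul_le_mul_left hlower hρ]
  by_cases hδ₂ : δ₂ < 1
  · exact Or.inl hδ₂
  refine Or.inr ⟨not_lt.mp hδ₂, hupper, not_le.mp fun hδ₄₁ => hδ₂ ?_⟩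
  have hpos : 0 < ρ * (1 - δ₂) := hmean ▸
    intervalIntegral_pos_of_pos_on hint (fun t _ => quadratic_pos_of_le_one hδ₄ hδ₄₁ (hx t)) hρ
  nlinarith

noncomputable def reducedLyapunov (β₂ β₄ δ₂ δ₄ x₁ x₂ : ℝ) : ℝ :=
  -(δ₄ / β₂) * x₁ + (δ₂ / β₄) * x₂ - (1 / β₂) * Real.log x₁

theorem hasDerivAt_reducedLyapunov {β₂ β₄ δ₂ δ₄ : ℝ} (hβ₂ : β₂ ≠ 0) (hβ₄ : β₄ ≠ 0)
    {x₁ x₂ : ℝ → ℝ} {t u : ℝ} (hx₁pos : 0 < x₁ t)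
    (hx₁ : HasDerivAt x₁ (β₂ * x₁ t * (1 - x₁ t - δ₂ * x₂ t)) t)
    (hx₂ : HasDerivAt x₂ (β₄ * (u - x₂ t - δ₄ * x₁ t * x₂ t)) t) :
    HasDerivAt (fun s => reducedLyapunov β₂ β₄ δ₂ δ₄ (x₁ s) (x₂ s))
      (δ₄ * x₁ t ^ 2 + (1 - δ₄) * x₁ t + δ₂ * u - 1) t := by
  refine (((hx₁.const_mul (-(δ₄ / β₂))).add (hx₂.const_mul (δ₂ / β₄))).sub
    ((hx₁.log hx₁pos.ne').const_mul (1 / β₂))).congr_deriv ?_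
  field_simp
  ring

theorem reduced_system_periodic_necessary_conditions_general
    (β₂ β₄ δ₂ δ₄ ρ : ℝ)
    (hβ₂ : 0 < β₂) (hβ₄ : 0 < β₄) (hδ₄ : 0 < δ₄) (hρ : 0 < ρ)
    (i : ℝ → ℝ)
    (himean : (1 / ρ) * ∫ t in (0:ℝ)..ρ, i t = 1)
    (x₁ x₂ : ℝ → ℝ)
    (hpos : ∀ t, 0 < x₁ t ∧ 0 < x₂ t)
    (hp₁ : Function.Periodic x₁ ρ) (hp₂ : Function.Periodic x₂ ρ)
    (hx₁ : ∀ t, HasDerivAt x₁ (β₂ * x₁ t * (1 - x₁ t - δ₂ * x₂ t)) t)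
    (hx₂ : ∀ t, HasDerivAt x₂ (β₄ * (i t - x₂ t - δ₄ * x₁ t * x₂ t)) t) :
    δ₂ < 1 ∨ (1 ≤ δ₂ ∧ δ₂ ≤ (1 + δ₄) ^ 2 / (4 * δ₄) ∧ 1 < δ₄) := by
  have hiρ : ∫ t in (0:ℝ)..ρ, i t = ρ := by
    field_simp at himean
    linarith
  -- a non-integrable `i` would have integral `0`
  have hii : IntervalIntegrable i volume 0 ρ :=
    intervalIntegrable_of_integral_ne_zero (by rw [hiρ]; exact hρ.ne')
  have hx₁c : Continuous x₁ := continuous_iff_continuousAt.mpr fun t => (hx₁ t).continuousAt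
  have hgi : IntervalIntegrable (fun t => δ₄ * x₁ t ^ 2 + (1 - δ₄) * x₁ t) volume 0 ρ :=
    (by fun_prop : Continuous _).intervalIntegrable 0 ρ
  have hV : Function.Periodic (fun s => reducedLyapunov β₂ β₄ δ₂ δ₄ (x₁ s) (x₂ s)) ρ :=
    fun s => by simp only [hp₁ s, hp₂ s]
  have hzero := integral_eq_zero_of_hasDerivAt_of_periodic hV
    (fun t => hasDerivAt_reducedLyapunov hβ₂.ne' hβ₄.ne' (hpos t).1 (hx₁ t) (hx₂ t)) 0
    (by simpa using (hgi.add (hii.const_mul δ₂)).sub intervalIntegrable_const)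
  rw [zero_add, integral_sub (hgi.add (hii.const_mul δ₂)) intervalIntegrable_const,
    integral_add hgi (hii.const_mul δ₂), integral_const_mul, hiρ, integral_const] at hzero
  refine parameter_conditions_of_integral_quadratic_eq hδ₄ hρ (fun t => (hpos t).1) hgi ?_
  simp only [sub_zero, smul_eq_mul, mul_one] at hzero
  linarith

/-- Necessary parameter conditions for existence of a strictly positive ρ-periodic
solution of the reduced system: either δ₂ < 1, or 1 ≤ δ₂ ≤ (1+δ₄)²/(4δ₄) and δ₄ > 1.
In particular no such solution exists when δ₂ > (1+δ₄)²/(4δ₄). -/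
theorem reduced_system_periodic_necessary_conditions
    (β₂ β₄ δ₂ δ₄ ρ : ℝ)
    (hβ₂ : 0 < β₂) (hβ₄ : 0 < β₄) (hδ₂ : 0 < δ₂) (hδ₄ : 0 < δ₄) (hρ : 0 < ρ)
    (i : ℝ → ℝ) (hi : Continuous i) (hip : Function.Periodic i ρ)
    (hinn : ∀ t, 0 ≤ i t)
    (himean : (1 / ρ) * ∫ t in (0:ℝ)..ρ, i t = 1)
    (x₁ x₂ : ℝ → ℝ)
    (hpos : ∀ t, 0 < x₁ t ∧ 0 < x₂ t)
    (hp₁ : Function.Periodic x₁ ρ) (hp₂ : Function.Periodic x₂ ρ)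
    (hx₁ : ∀ t, HasDerivAt x₁ (β₂ * x₁ t * (1 - x₁ t - δ₂ * x₂ t)) t)
    (hx₂ : ∀ t, HasDerivAt x₂ (β₄ * (i t - x₂ t - δ₄ * x₁ t * x₂ t)) t) :
    δ₂ < 1 ∨ (1 ≤ δ₂ ∧ δ₂ ≤ (1 + δ₄) ^ 2 / (4 * δ₄) ∧ 1 < δ₄) :=
  reduced_system_periodic_necessary_conditions_general β₂ β₄ δ₂ δ₄ ρ hβ₂ hβ₄ hδ₄ hρ i himean x₁ x₂
    hpos hp₁ hp₂ hx₁ hx₂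
end

section
/- Under the hypotheses of the previous statement, any strictly positive ρ-periodic solution of the reduced system satisfies 0 ≤ (1/ρ)∫₀^ρ x₁(s) ds ≤ (δ₄ - 1 + √((1+δ₄)² - 4δ₄δ₂))/(2δ₄). -/
/-!
Integrating the equations for `(log x₁)'`, `x₁'` and `x₂'` over a period (each integrates to
zero by periodicity) gives, with `A = ∫ x₁`, `B = ∫ x₂`, `S = ∫ x₁²`, `Q = ∫ x₁ x₂`, the
relations `A + δ₂ B = ρ`, `S + δ₂ Q = A` and `B + δ₄ Q = ρ`. Together with the Cauchy–Schwarz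
bound `A² ≤ ρ S` they show that the mean `m = A / ρ` satisfies
`δ₄ m² + (1 - δ₄) m + δ₂ - 1 ≤ 0`, so `m` lies below the larger root of this quadratic.
-/

open intervalIntegral

theorem Function.Periodic.intervalIntegral_deriv_eq_zero {f f' : ℝ → ℝ} {T : ℝ}
    (hf : Function.Periodic f T) (hderiv : ∀ t, HasDerivAt f (f' t) t) (hf' : Continuous f') :
    ∫ t in (0 : ℝ)..T, f' t = 0 := by
  rw [integral_eq_sub_of_hasDerivAt (fun t _ => hderiv t) (hf'.intervalIntegrable 0 T),
    ← zero_add T, hf, sub_self]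

theorem Function.Periodic.intervalIntegral_logDeriv_eq_zero {f g : ℝ → ℝ} {T : ℝ}
    (hf : Function.Periodic f T) (hpos : ∀ t, 0 < f t)
    (hderiv : ∀ t, HasDerivAt f (f t * g t) t) (hg : Continuous g) :
    ∫ t in (0 : ℝ)..T, g t = 0 := by
  have hlog : ∀ t, HasDerivAt (fun s => Real.log (f s)) (g t) t := fun t => by
    simpa [(hpos t).ne'] using (hderiv t).log (hpos t).ne'
  exact Function.Periodic.intervalIntegral_deriv_eq_zero (fun t => by simp only [hf t]) hlog hg

theorem sq_intervalIntegral_le_mul_intervalIntegral_sq {f : ℝ → ℝ} {a b : ℝ} (hab : a ≤ b)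
    (hf : Continuous f) :
    (∫ x in a..b, f x) ^ 2 ≤ (b - a) * ∫ x in a..b, f x ^ 2 := by
  have hint : ∀ g : ℝ → ℝ, Continuous g → IntervalIntegrable g MeasureTheory.volume a b :=
    fun g hg => hg.intervalIntegrable a b
  have hquad : ∀ c : ℝ, 0 ≤ (b - a) * (c * c) + (-2 * ∫ x in a..b, f x) * c +
      ∫ x in a..b, f x ^ 2 := fun c => by
    have hsq : 0 ≤ ∫ x in a..b, (f x - c) ^ 2 := integral_nonneg hab fun x _ => sq_nonneg _
    simp_rw [sub_sq] at hsq
    rw [integral_add (hint _ (by fun_prop)) (hint _ (by fun_prop)),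
      integral_sub (hint _ (by fun_prop)) (hint _ (by fun_prop))] at hsq
    simp only [integral_const_mul, integral_mul_const, integral_const, smul_eq_mul] at hsq
    linarith
  have := discrim_le_zero hquad
  rw [discrim] at this
  linarith

theorem le_quadratic_root_of_nonpos {a b c x : ℝ} (ha : 0 < a)
    (h : a * (x * x) + b * x + c ≤ 0) :
    x ≤ (-b + √(discrim a b c)) / (2 * a) := by
  have hsq : (2 * a * x + b) ^ 2 ≤ discrim a b c := by
    rw [discrim]; nlinarith
  rw [le_div_iff₀ (by positivity)]
  linarith [le_abs_self (2 * a * x + b), Real.abs_le_sqrt hsq]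

namespace ReducedSystem

variable {β₂ β₄ δ₂ δ₄ ρ : ℝ} {i x₁ x₂ : ℝ → ℝ}

theorem integral_add_mul_integral_eq_period (hβ₂ : β₂ ≠ 0)
    (hpos : ∀ t, 0 < x₁ t) (hp₁ : Function.Periodic x₁ ρ) (hc₁ : Continuous x₁)
    (hc₂ : Continuous x₂) (hx₁ : ∀ t, HasDerivAt x₁ (β₂ * x₁ t * (1 - x₁ t - δ₂ * x₂ t)) t) :
    (∫ t in (0 : ℝ)..ρ, x₁ t) + δ₂ * ∫ t in (0 : ℝ)..ρ, x₂ t = ρ := by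
  have hint : ∀ g : ℝ → ℝ, Continuous g → IntervalIntegrable g MeasureTheory.volume 0 ρ :=
    fun g hg => hg.intervalIntegrable 0 ρ
  have h := hp₁.intervalIntegral_logDeriv_eq_zero (g := fun t => β₂ * (1 - x₁ t - δ₂ * x₂ t))
    hpos (fun t => by convert hx₁ t using 1; ring) (by fun_prop)
  rw [integral_const_mul, integral_sub (hint _ (by fun_prop)) (hint _ (by fun_prop)),
    integral_sub (hint _ (by fun_prop)) (hint _ (by fun_prop)), integral_const_mul] at h
  simp only [integral_const, smul_eq_mul, mul_one, sub_zero, mul_eq_zero, hβ₂, false_or] at h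
  linarith

theorem integral_sq_add_mul_integral_mul_eq_integral (hβ₂ : β₂ ≠ 0)
    (hp₁ : Function.Periodic x₁ ρ) (hc₁ : Continuous x₁)
    (hc₂ : Continuous x₂) (hx₁ : ∀ t, HasDerivAt x₁ (β₂ * x₁ t * (1 - x₁ t - δ₂ * x₂ t)) t) :
    (∫ t in (0 : ℝ)..ρ, x₁ t ^ 2) + δ₂ * ∫ t in (0 : ℝ)..ρ, x₁ t * x₂ t =
      ∫ t in (0 : ℝ)..ρ, x₁ t := by
  have hint : ∀ g : ℝ → ℝ, Continuous g → IntervalIntegrable g MeasureTheory.volume 0 ρ :=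
    fun g hg => hg.intervalIntegrable 0 ρ
  have h := hp₁.intervalIntegral_deriv_eq_zero
    (f' := fun t => β₂ * (x₁ t - x₁ t ^ 2 - δ₂ * (x₁ t * x₂ t)))
    (fun t => by convert hx₁ t using 1; ring) (by fun_prop)
  rw [integral_const_mul, integral_sub (hint _ (by fun_prop)) (hint _ (by fun_prop)),
    integral_sub (hint _ (by fun_prop)) (hint _ (by fun_prop)), integral_const_mul] at h
  simp only [mul_eq_zero, hβ₂, false_or] at h
  linarith

theorem integral_add_mul_integral_mul_eq_integral_forcing (hβ₄ : β₄ ≠ 0)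
    (hp₂ : Function.Periodic x₂ ρ) (hi : Continuous i) (hc₁ : Continuous x₁)
    (hc₂ : Continuous x₂) (hx₂ : ∀ t, HasDerivAt x₂ (β₄ * (i t - x₂ t - δ₄ * x₁ t * x₂ t)) t) :
    (∫ t in (0 : ℝ)..ρ, x₂ t) + δ₄ * ∫ t in (0 : ℝ)..ρ, x₁ t * x₂ t =
      ∫ t in (0 : ℝ)..ρ, i t := by
  have hint : ∀ g : ℝ → ℝ, Continuous g → IntervalIntegrable g MeasureTheory.volume 0 ρ :=
    fun g hg => hg.intervalIntegrable 0 ρ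
  have h := hp₂.intervalIntegral_deriv_eq_zero
    (f' := fun t => β₄ * (i t - x₂ t - δ₄ * (x₁ t * x₂ t)))
    (fun t => by convert hx₂ t using 1; ring) (by fun_prop)
  rw [integral_const_mul, integral_sub (hint _ (by fun_prop)) (hint _ (by fun_prop)),
    integral_sub (hint _ (by fun_prop)) (hint _ (by fun_prop)), integral_const_mul] at h
  simp only [mul_eq_zero, hβ₄, false_or] at h
  linarith

end ReducedSystem

open ReducedSystem in
theorem reduced_system_periodic_mean_bound_general
    (β₂ β₄ δ₂ δ₄ ρ : ℝ)
    (hβ₂ : 0 < β₂) (hβ₄ : 0 < β₄) (hδ₄ : 0 < δ₄) (hρ : 0 < ρ)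
    (i : ℝ → ℝ) (hi : Continuous i)
    (himean : (1 / ρ) * ∫ t in (0:ℝ)..ρ, i t = 1)
    (x₁ x₂ : ℝ → ℝ)
    (hpos : ∀ t, 0 < x₁ t ∧ 0 < x₂ t)
    (hp₁ : Function.Periodic x₁ ρ) (hp₂ : Function.Periodic x₂ ρ)
    (hx₁ : ∀ t, HasDerivAt x₁ (β₂ * x₁ t * (1 - x₁ t - δ₂ * x₂ t)) t)
    (hx₂ : ∀ t, HasDerivAt x₂ (β₄ * (i t - x₂ t - δ₄ * x₁ t * x₂ t)) t) :
    0 ≤ (1 / ρ) * ∫ s in (0:ℝ)..ρ, x₁ s ∧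
    (1 / ρ) * (∫ s in (0:ℝ)..ρ, x₁ s) ≤
      (δ₄ - 1 + Real.sqrt ((1 + δ₄) ^ 2 - 4 * δ₄ * δ₂)) / (2 * δ₄) := by
  have hc₁ : Continuous x₁ := Differentiable.continuous fun t => (hx₁ t).differentiableAt
  have hc₂ : Continuous x₂ := Differentiable.continuous fun t => (hx₂ t).differentiableAt
  have hI : ∫ t in (0:ℝ)..ρ, i t = ρ := by field_simp at himean; linarith
  have e₁ := integral_add_mul_integral_eq_period hβ₂.ne' (fun t => (hpos t).1) hp₁ hc₁ hc₂ hx₁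
  have e₂ := integral_sq_add_mul_integral_mul_eq_integral hβ₂.ne' hp₁ hc₁ hc₂ hx₁
  have e₃ := integral_add_mul_integral_mul_eq_integral_forcing hβ₄.ne' hp₂ hi hc₁ hc₂ hx₂
  have hCS := sq_intervalIntegral_le_mul_intervalIntegral_sq hρ.le hc₁
  rw [sub_zero] at hCS
  set m := (1 / ρ) * ∫ s in (0:ℝ)..ρ, x₁ s with hm
  have hquad : δ₄ * (m * m) + (1 - δ₄) * m + (δ₂ - 1) ≤ 0 := by
    rw [hm]
    field_simp
    linear_combination mul_le_mul_of_nonneg_left hCS hδ₄.le + δ₄ * ρ * e₂ -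
      δ₂ * ρ * (e₃.trans hI) + ρ * e₁
  refine ⟨mul_nonneg (by positivity) (integral_nonneg hρ.le fun t _ => (hpos t).1.le), ?_⟩
  convert le_quadratic_root_of_nonpos hδ₄ hquad using 3
  · ring
  · rw [discrim]; ring_nf

/-- The mean of x₁ over one period lies between 0 and the larger root
(δ₄ - 1 + √((1+δ₄)² - 4δ₄δ₂))/(2δ₄). -/
theorem reduced_system_periodic_mean_bound
    (β₂ β₄ δ₂ δ₄ ρ : ℝ)
    (hβ₂ : 0 < β₂) (hβ₄ : 0 < β₄) (hδ₂ : 0 < δ₂) (hδ₄ : 0 < δ₄) (hρ : 0 < ρ)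
    (hdisc : δ₂ ≤ (1 + δ₄) ^ 2 / (4 * δ₄))
    (i : ℝ → ℝ) (hi : Continuous i) (hip : Function.Periodic i ρ)
    (hinn : ∀ t, 0 ≤ i t)
    (himean : (1 / ρ) * ∫ t in (0:ℝ)..ρ, i t = 1)
    (x₁ x₂ : ℝ → ℝ)
    (hpos : ∀ t, 0 < x₁ t ∧ 0 < x₂ t)
    (hp₁ : Function.Periodic x₁ ρ) (hp₂ : Function.Periodic x₂ ρ)
    (hx₁ : ∀ t, HasDerivAt x₁ (β₂ * x₁ t * (1 - x₁ t - δ₂ * x₂ t)) t)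
    (hx₂ : ∀ t, HasDerivAt x₂ (β₄ * (i t - x₂ t - δ₄ * x₁ t * x₂ t)) t) :
    0 ≤ (1 / ρ) * ∫ s in (0:ℝ)..ρ, x₁ s ∧
    (1 / ρ) * (∫ s in (0:ℝ)..ρ, x₁ s) ≤
      (δ₄ - 1 + Real.sqrt ((1 + δ₄) ^ 2 - 4 * δ₄ * δ₂)) / (2 * δ₄) :=
  reduced_system_periodic_mean_bound_general β₂ β₄ δ₂ δ₄ ρ hβ₂ hβ₄ hδ₄ hρ i hi himean x₁ x₂ hpos hp₁
    hp₂ hx₁ hx₂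
end

section
/- For the autonomous system u₁' = u₁(1 - u₁ - α₁u₂ - δ₁u₃), u₂' = β₂u₂(1 - u₂ - α₂u₁ - δ₂u₄), u₃' = β₃(u₂ - u₃), u₄' = β₄(1 - u₄ - δ₄u₄u₂) with all parameters positive, the steady state (1,0,0,1) has Jacobian eigenvalues -1, β₂(1 - α₂ - δ₂), -β₃, -β₄; hence it is linearly stable if and only if α₂ + δ₂ > 1. -/
open Polynomial

/-!
Linearising at `(1,0,0,1)` gives a matrix whose only off-diagonal entries lie in the second
column and in the `(0,2)` slot; reordering the variables as `(u₂, u₃, u₁, u₄)` makes it lower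
triangular, so its characteristic polynomial splits into the diagonal linear factors. Three of
the eigenvalues are negative outright, so stability is decided by the sign of
`β₂(1 - α₂ - δ₂)`.
-/

theorem Matrix.charpoly_fin_four_of_permuted_triangular {R : Type*} [CommRing R]
    (p q r s a b c e : R) :
    (!![p, a, b, 0; 0, q, 0, 0; 0, c, r, 0; 0, e, 0, s] : Matrix (Fin 4) (Fin 4) R).charpoly =
      (X - C p) * (X - C q) * (X - C r) * (X - C s) := by
  simp [Matrix.charpoly, Matrix.det_succ_row_zero, Fin.sum_univ_succ, Matrix.charmatrix_apply,
    Fin.succAbove]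
  ring

theorem Polynomial.isRoot_prod_four_X_sub_C {R : Type*} [CommRing R] [IsDomain R]
    (a b c d μ : R) :
    ((X - C a) * (X - C b) * (X - C c) * (X - C d)).IsRoot μ ↔
      μ = a ∨ μ = b ∨ μ = c ∨ μ = d := by
  simp only [IsRoot.def, eval_mul, eval_sub, eval_X, eval_C, mul_eq_zero, sub_eq_zero, or_assoc]

theorem Polynomial.forall_isRoot_prod_four_X_sub_C_neg_iff {R : Type*} [CommRing R] [IsDomain R]
    [LT R] {p q r s : R} (hp : p < 0) (hr : r < 0) (hs : s < 0) :
    (∀ μ, ((X - C p) * (X - C q) * (X - C r) * (X - C s)).IsRoot μ → μ < 0) ↔ q < 0 := by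
  simp only [isRoot_prod_four_X_sub_C]
  refine ⟨fun h => h q (by simp), ?_⟩
  rintro hq μ (rfl | rfl | rfl | rfl) <;> assumption

theorem tumour_free_steady_state_stability_general
    (α₁ α₂ δ₁ δ₂ δ₄ β₂ β₃ β₄ : ℝ)
    (hβ₂ : 0 < β₂) (hβ₃ : 0 < β₃) (hβ₄ : 0 < β₄)
    (J : Matrix (Fin 4) (Fin 4) ℝ)
    (hJ : J = !![-1, -α₁, -δ₁, 0;
                 0, β₂ * (1 - α₂ - δ₂), 0, 0;
                 0, β₃, -β₃, 0;
                 0, -β₄ * δ₄, 0, -β₄]) :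
    J.charpoly = (X - C (-1)) * (X - C (β₂ * (1 - α₂ - δ₂))) *
      (X - C (-β₃)) * (X - C (-β₄)) ∧
    ((∀ μ : ℝ, Module.End.HasEigenvalue (Matrix.toLin' J) μ → μ < 0) ↔ 1 < α₂ + δ₂) := by
  have hcharpoly : J.charpoly = (X - C (-1)) * (X - C (β₂ * (1 - α₂ - δ₂))) *
      (X - C (-β₃)) * (X - C (-β₄)) := hJ ▸ Matrix.charpoly_fin_four_of_permuted_triangular ..
  refine ⟨hcharpoly, ?_⟩
  simp only [Module.End.hasEigenvalue_iff_isRoot_charpoly, Matrix.charpoly_toLin', hcharpoly]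
  rw [forall_isRoot_prod_four_X_sub_C_neg_iff (by norm_num) (neg_neg_of_pos hβ₃)
    (neg_neg_of_pos hβ₄), ← smul_eq_mul, smul_neg_iff_of_pos_left hβ₂,
    sub_sub, sub_neg]

/-- The tumour-free steady state (1,0,0,1): the Jacobian has eigenvalues
-1, β₂(1-α₂-δ₂), -β₃, -β₄, hence all eigenvalues are negative iff α₂ + δ₂ > 1. -/
theorem tumour_free_steady_state_stability
    (α₁ α₂ δ₁ δ₂ δ₄ β₂ β₃ β₄ : ℝ)
    (hα₁ : 0 < α₁) (hα₂ : 0 < α₂) (hδ₁ : 0 < δ₁) (hδ₂ : 0 < δ₂) (hδ₄ : 0 < δ₄)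
    (hβ₂ : 0 < β₂) (hβ₃ : 0 < β₃) (hβ₄ : 0 < β₄)
    (J : Matrix (Fin 4) (Fin 4) ℝ)
    (hJ : J = !![-1, -α₁, -δ₁, 0;
                 0, β₂ * (1 - α₂ - δ₂), 0, 0;
                 0, β₃, -β₃, 0;
                 0, -β₄ * δ₄, 0, -β₄]) :
    J.charpoly = (X - C (-1)) * (X - C (β₂ * (1 - α₂ - δ₂))) *
      (X - C (-β₃)) * (X - C (-β₄)) ∧
    ((∀ μ : ℝ, Module.End.HasEigenvalue (Matrix.toLin' J) μ → μ < 0) ↔ 1 < α₂ + δ₂) :=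
  tumour_free_steady_state_stability_general α₁ α₂ δ₁ δ₂ δ₄ β₂ β₃ β₄ hβ₂ hβ₃ hβ₄ J hJ
end

section
/- Let û₂ = (δ₄ - 1 + √((1+δ₄)² - 4δ₄δ₂))/(2δ₄) with 0 < δ₂ < (1+δ₄)²/(4δ₄), δ₄ > 0, and suppose û₂ > 0. If δ₂ < (α₁+δ₁+δ₄)(α₁+δ₁-1)/(α₁+δ₁)², then 1 - (α₁+δ₁)û₂ < 0. -/
/-- If δ₂ < (α₁+δ₁+δ₄)(α₁+δ₁-1)/(α₁+δ₁)², then 1 - (α₁+δ₁)û₂ < 0, where û₂ is the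
larger root of δ₄x² + (1-δ₄)x + δ₂ - 1 = 0. -/
theorem normal_free_stability_inequality
    (α₁ δ₁ δ₂ δ₄ : ℝ)
    (hα₁ : 0 < α₁) (hδ₁ : 0 < δ₁) (hδ₂ : 0 < δ₂) (hδ₄ : 0 < δ₄)
    (hdisc : δ₂ < (1 + δ₄) ^ 2 / (4 * δ₄))
    (u : ℝ)
    (hu : u = (δ₄ - 1 + Real.sqrt ((1 + δ₄) ^ 2 - 4 * δ₄ * δ₂)) / (2 * δ₄))
    (hupos : 0 < u)
    (hcond : δ₂ < (α₁ + δ₁ + δ₄) * (α₁ + δ₁ - 1) / (α₁ + δ₁) ^ 2) :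
    1 - (α₁ + δ₁) * u < 0 := by
  set s := α₁ + δ₁ with hs
  have hspos : 0 < s := by positivity
  set D := (1 + δ₄) ^ 2 - 4 * δ₄ * δ₂ with hDdef
  have hDpos : 0 < D := by
    have := (lt_div_iff₀ (by positivity : (0:ℝ) < 4 * δ₄)).mp hdisc
    nlinarith
  have hsq : Real.sqrt D ^ 2 = D := Real.sq_sqrt hDpos.le
  have hsnn : 0 < Real.sqrt D := Real.sqrt_pos.mpr hDpos
  have hcond' : δ₂ * s ^ 2 < (s + δ₄) * (s - 1) :=
    (lt_div_iff₀ (by positivity : (0:ℝ) < s ^ 2)).mp hcond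
  have key : 2 * δ₄ - s * (δ₄ - 1) < s * Real.sqrt D := by
    rcases le_or_gt (2 * δ₄ - s * (δ₄ - 1)) 0 with h | h
    · calc 2 * δ₄ - s * (δ₄ - 1) ≤ 0 := h
        _ < s * Real.sqrt D := by positivity
    · have hlt : (2 * δ₄ - s * (δ₄ - 1)) ^ 2 < (s * Real.sqrt D) ^ 2 := by
        have h2 : (s * Real.sqrt D) ^ 2 = s ^ 2 * D := by rw [mul_pow, hsq]
        rw [h2, hDdef]
        nlinarith [mul_pos hδ₄ (sub_pos.mpr hcond')]
      exact lt_of_pow_lt_pow_left₀ 2 (by positivity) hlt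
  subst hu
  rw [sub_neg, mul_div_assoc', lt_div_iff₀ (by positivity : (0:ℝ) < 2 * δ₄)]
  nlinarith [key]
end

section
/- Let F(t, u) denote the right-hand side of the system u₁' = u₁(1-u₁-α₁u₂-δ₁u₃), u₂' = β₂u₂(1-u₂-α₂u₁-δ₂u₄), u₃' = β₃(u₂-u₃), u₄' = β₄[i(t)-u₄-δ₄u₄u₂], where i : ℝ₊ → [0, i_M] is continuous with i_M > 0 and all parameters are positive. If u(0) ∈ ℝ₊⁴, then the system has a unique global solution u with u(t) ∈ ℝ₊⁴ for all t ≥ 0; moreover the solution remains in the compact box [0, max{1,u₁(0)}] × [0, max{1,u₂(0)}] × [0, max{1,u₂(0),u₃(0)}] × [0, max{i_M,u₄(0)}]. -/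
/-!
Extend the vector field from the box `[0, M]` by composing it with the coordinatewise projection
onto the box. The extended field is globally Lipschitz in the state and bounded on bounded time
intervals, so Picard–Lindelöf on `(-n, n)` together with uniqueness glues to a global solution.
On each face of the box the field points inwards (the tangent condition), and this persists for
the extension outside the box, so a fencing argument keeps the solution in the box for `t ≥ 0`;
there the projection is the identity and the solution solves the original system. Uniqueness
holds because the field is Lipschitz on compact sets, uniformly in time.
-/

open Set Function Filter Topology
open scoped NNReal

theorem LipschitzWith.pi {α ι : Type*} [PseudoEMetricSpace α] [Fintype ι] {β : ι → Type*}
    [∀ j, PseudoEMetricSpace (β j)] {K : ℝ≥0} {f : α → ∀ j, β j}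
    (hf : ∀ j, LipschitzWith K fun x ↦ f x j) : LipschitzWith K f :=
  fun x y ↦ edist_pi_le_iff.2 fun j ↦ hf j x y

theorem image_le_of_hasDerivAt_nonpos_above {g g' : ℝ → ℝ} {a M : ℝ}
    (hg : ∀ t, a ≤ t → HasDerivAt g (g' t) t) (ha : g a ≤ M)
    (hM : ∀ t, a ≤ t → M < g t → g' t ≤ 0) {t : ℝ} (ht : a ≤ t) : g t ≤ M := by
  -- fence against the strict barriers `M + c (s - a + 1)`, then let `c → 0`
  have hfence : ∀ c > 0, g t ≤ M + c * (t - a + 1) := by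
    intro c hc
    refine image_le_of_deriv_right_lt_deriv_boundary (B := fun s ↦ M + c * (s - a + 1))
      (HasDerivAt.continuousOn fun s hs ↦ hg s hs.1)
      (fun s hs ↦ (hg s hs.1).hasDerivWithinAt) (by linarith)
      (fun s ↦ (((hasDerivAt_id s).sub_const a).add_const 1).const_mul c |>.const_add M)
      (fun s hs hgs ↦ ?_) ⟨ht, le_rfl⟩
    have : M < g s := by rw [hgs]; nlinarith [hs.1]
    linarith [hM s hs.1 this]
  refine le_of_forall_pos_le_add fun ε hε ↦ ?_
  have hpos : 0 < t - a + 1 := by linarith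
  simpa [div_mul_cancel₀ ε hpos.ne'] using hfence (ε / (t - a + 1)) (div_pos hε hpos)

section ODE

variable {E : Type*} [NormedAddCommGroup E] [NormedSpace ℝ E]

theorem exists_forall_mem_Ioo_hasDerivAt_of_lipschitzWith [CompleteSpace E] {v : ℝ → E → E}
    {K : ℝ≥0} (hlip : ∀ t, LipschitzWith K (v t)) (hcont : ∀ x, Continuous (v · x)) {T C : ℝ}
    (hT : 0 ≤ T) (hC : ∀ t ∈ Icc (-T) T, ∀ x, ‖v t x‖ ≤ C) (x₀ : E) :
    ∃ u : ℝ → E, u 0 = x₀ ∧ ∀ t ∈ Ioo (-T) T, HasDerivAt u (v t (u t)) t := by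
  have hC0 : 0 ≤ C := (norm_nonneg _).trans (hC 0 ⟨by linarith, hT⟩ x₀)
  have hpl : IsPicardLindelof v (tmin := -T) (tmax := T) ⟨0, by linarith, hT⟩ x₀
      (C * T).toNNReal 0 C.toNNReal K :=
    { lipschitzOnWith := fun t _ ↦ (hlip t).lipschitzOnWith
      continuousOn := fun x _ ↦ (hcont x).continuousOn
      norm_le := fun t ht x _ ↦ by rw [Real.coe_toNNReal _ hC0]; exact hC t ht x
      mul_max_le := by simp [Real.coe_toNNReal _ hC0, Real.coe_toNNReal _ (mul_nonneg hC0 hT)] }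
  obtain ⟨u, hu0, hu⟩ := hpl.exists_eq_forall_mem_Icc_hasDerivWithinAt₀
  exact ⟨u, hu0, fun t ht ↦ (hu t (Ioo_subset_Icc_self ht)).hasDerivAt (Icc_mem_nhds ht.1 ht.2)⟩

theorem exists_forall_hasDerivAt_of_lipschitzWith [CompleteSpace E] {v : ℝ → E → E}
    {K : ℝ≥0} (hlip : ∀ t, LipschitzWith K (v t)) (hcont : ∀ x, Continuous (v · x))
    (hbdd : ∀ T, ∃ C, ∀ t ∈ Icc (-T) T, ∀ x, ‖v t x‖ ≤ C) (x₀ : E) :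
    ∃ u : ℝ → E, u 0 = x₀ ∧ ∀ t, HasDerivAt u (v t (u t)) t := by
  choose C hC using hbdd
  choose f hf0 hf using fun n : ℕ ↦
    exists_forall_mem_Ioo_hasDerivAt_of_lipschitzWith hlip hcont n.cast_nonneg (hC n) x₀
  have hagree : ∀ n m : ℕ, n ≤ m → EqOn (f n) (f m) (Ioo (-n) n) := by
    intro n m hnm t ht
    have hsub : Ioo (-(n : ℝ)) n ⊆ Ioo (-(m : ℝ)) m :=
      Ioo_subset_Ioo (by simpa using hnm) (by simpa using hnm)
    exact ODE_solution_unique_of_mem_Ioo (s := fun _ ↦ univ) (fun t _ ↦ (hlip t).lipschitzOnWith)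
      ⟨by linarith [ht.1, ht.2], by linarith [ht.1, ht.2]⟩ (fun t ht ↦ ⟨hf n t ht, trivial⟩)
      (fun t ht ↦ ⟨hf m t (hsub ht), trivial⟩) ((hf0 n).trans (hf0 m).symm) ht
  -- near `t`, read the solution off the one on `(-N t, N t)`
  let N : ℝ → ℕ := fun t ↦ ⌈|t|⌉₊ + 1
  have hN : ∀ t, |t| < N t := fun t ↦ by
    simp only [N, Nat.cast_add, Nat.cast_one]; linarith [Nat.le_ceil |t|]
  refine ⟨fun t ↦ f (N t) t, by simp [N, hf0], fun t ↦ ?_⟩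
  have hloc : (fun s ↦ f (N s) s) =ᶠ[𝓝 t] f (N t) := by
    filter_upwards [(isOpen_lt continuous_abs continuous_const).mem_nhds (hN t)] with s hs
    rcases le_total (N s) (N t) with h | h
    · exact hagree _ _ h (abs_lt.1 (hN s))
    · exact (hagree _ _ h (abs_lt.1 hs)).symm
  exact (hf _ t (abs_lt.1 (hN t))).congr_of_eventuallyEq hloc

theorem ODE_solution_unique_of_isCompact_lipschitzOnWith {v : ℝ → E → E}
    (hv : ∀ s, IsCompact s → ∃ K, ∀ t, LipschitzOnWith K (v t) s) {f g : ℝ → E} {a : ℝ}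
    (hf : ∀ t, a ≤ t → HasDerivAt f (v t (f t)) t) (hg : ∀ t, a ≤ t → HasDerivAt g (v t (g t)) t)
    (ha : f a = g a) {t : ℝ} (ht : a ≤ t) : f t = g t := by
  have hfc : ContinuousOn f (Icc a t) := HasDerivAt.continuousOn fun s hs ↦ hf s hs.1
  have hgc : ContinuousOn g (Icc a t) := HasDerivAt.continuousOn fun s hs ↦ hg s hs.1
  obtain ⟨K, hK⟩ := hv _ ((isCompact_Icc.image_of_continuousOn hfc).union
    (isCompact_Icc.image_of_continuousOn hgc))
  exact ODE_solution_unique_of_mem_Icc_right (fun s _ ↦ hK s) hfc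
    (fun s hs ↦ (hf s hs.1).hasDerivWithinAt)
    (fun s hs ↦ Or.inl (mem_image_of_mem f (Ico_subset_Icc_self hs))) hgc
    (fun s hs ↦ (hg s hs.1).hasDerivWithinAt)
    (fun s hs ↦ Or.inr (mem_image_of_mem g (Ico_subset_Icc_self hs))) ha ⟨ht, le_rfl⟩

end ODE

section Box

variable {ι : Type*} {a b : ι → ℝ}

def projIccPi (a b x : ι → ℝ) : ι → ℝ := fun j ↦ max (a j) (min (x j) (b j))

theorem lipschitzWith_projIccPi [Fintype ι] : LipschitzWith 1 (projIccPi a b) :=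
  LipschitzWith.pi fun j ↦ ((LipschitzWith.eval j).min_const (b j)).const_max (a j)

theorem projIccPi_mem (hab : a ≤ b) (x : ι → ℝ) : projIccPi a b x ∈ Icc a b :=
  ⟨fun _ ↦ le_max_left _ _, fun j ↦ max_le (hab j) (min_le_right _ _)⟩

theorem projIccPi_of_mem {x : ι → ℝ} (hx : x ∈ Icc a b) : projIccPi a b x = x :=
  funext fun j ↦ by simp [projIccPi, min_eq_left (hx.2 j), max_eq_right (hx.1 j)]

theorem projIccPi_apply_of_le_left {x : ι → ℝ} {j : ι} (h : x j ≤ a j) :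
    projIccPi a b x j = a j :=
  max_eq_left ((min_le_left _ _).trans h)

theorem projIccPi_apply_of_right_le (hab : a ≤ b) {x : ι → ℝ} {j : ι} (h : b j ≤ x j) :
    projIccPi a b x j = b j := by
  simp [projIccPi, min_eq_right h, max_eq_right (hab j)]

theorem exists_forall_hasDerivAt_mem_Icc [Fintype ι] {v : ℝ → (ι → ℝ) → ι → ℝ} {x₀ : ι → ℝ}
    (hcont : Continuous (uncurry v)) (hlip : ∃ K, ∀ t, LipschitzOnWith K (v t) (Icc a b))
    (hlow : ∀ t, 0 ≤ t → ∀ x ∈ Icc a b, ∀ j, x j = a j → 0 ≤ v t x j)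
    (hup : ∀ t, 0 ≤ t → ∀ x ∈ Icc a b, ∀ j, x j = b j → v t x j ≤ 0) (hx₀ : x₀ ∈ Icc a b) :
    ∃ u : ℝ → ι → ℝ, u 0 = x₀ ∧ ∀ t, 0 ≤ t → HasDerivAt u (v t (u t)) t ∧ u t ∈ Icc a b := by
  have hab : a ≤ b := hx₀.1.trans hx₀.2
  obtain ⟨K, hlip⟩ := hlip
  have hlipP : ∀ t, LipschitzWith K fun x ↦ v t (projIccPi a b x) := fun t ↦ by
    rw [← mul_one K, ← lipschitzOnWith_univ]
    exact (hlip t).comp lipschitzWith_projIccPi.lipschitzOnWith fun x _ ↦ projIccPi_mem hab x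
  have hbdd : ∀ T, ∃ C, ∀ t ∈ Icc (-T) T, ∀ x, ‖v t (projIccPi a b x)‖ ≤ C := fun T ↦
    have ⟨C, hC⟩ := (isCompact_Icc.prod isCompact_Icc).exists_bound_of_continuousOn
      hcont.continuousOn
    ⟨C, fun t ht x ↦ hC (t, projIccPi a b x) ⟨ht, projIccPi_mem hab x⟩⟩
  obtain ⟨u, hu0, hu⟩ := exists_forall_hasDerivAt_of_lipschitzWith hlipP
    (fun x ↦ hcont.comp (continuous_id.prodMk continuous_const)) hbdd x₀
  have hcoord : ∀ t j, HasDerivAt (u · j) (v t (projIccPi a b (u t)) j) t :=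
    fun t j ↦ hasDerivAt_pi.1 (hu t) j
  have hmem : ∀ t, 0 ≤ t → u t ∈ Icc a b := fun t ht ↦ by
    refine ⟨fun j ↦ ?_, fun j ↦ ?_⟩
    · refine neg_le_neg_iff.1 <| image_le_of_hasDerivAt_nonpos_above (fun s _ ↦ (hcoord s j).neg)
        (by simpa [hu0] using hx₀.1 j) (fun s hs hlt ↦ ?_) ht
      exact neg_nonpos.2 <| hlow s hs _ (projIccPi_mem hab (u s)) j
        (projIccPi_apply_of_le_left (neg_lt_neg_iff.1 hlt).le)
    · exact image_le_of_hasDerivAt_nonpos_above (fun s _ ↦ hcoord s j)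
        (by simpa [hu0] using hx₀.2 j) (fun s hs hlt ↦ hup s hs _ (projIccPi_mem hab (u s)) j
          (projIccPi_apply_of_right_le hab hlt.le)) ht
  refine ⟨u, hu0, fun t ht ↦ ⟨?_, hmem t ht⟩⟩
  simpa only [projIccPi_of_mem (hmem t ht)] using hu t

end Box

section TumourModel

variable {α₁ α₂ δ₁ δ₂ δ₄ β₂ β₃ β₄ : ℝ} {i : ℝ → ℝ}

def tumourField (α₁ α₂ δ₁ δ₂ δ₄ β₂ β₃ β₄ : ℝ) (i : ℝ → ℝ) (t : ℝ) (x : Fin 4 → ℝ) :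
    Fin 4 → ℝ :=
  ![x 0 * (1 - x 0 - α₁ * x 1 - δ₁ * x 2),
    β₂ * x 1 * (1 - x 1 - α₂ * x 0 - δ₂ * x 3),
    β₃ * (x 1 - x 2),
    β₄ * (i t - x 3 - δ₄ * x 3 * x 1)]

-- `tumourField` minus the drug input `β₄ i t`; its Lipschitz constants do not depend on `t`
def tumourKinetics (α₁ α₂ δ₁ δ₂ δ₄ β₂ β₃ β₄ : ℝ) (x : Fin 4 → ℝ) : Fin 4 → ℝ :=
  ![x 0 * (1 - x 0 - α₁ * x 1 - δ₁ * x 2),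
    β₂ * x 1 * (1 - x 1 - α₂ * x 0 - δ₂ * x 3),
    β₃ * (x 1 - x 2),
    -(β₄ * (x 3 + δ₄ * x 3 * x 1))]

theorem tumourField_eq_kinetics_add_single (t : ℝ) (x : Fin 4 → ℝ) :
    tumourField α₁ α₂ δ₁ δ₂ δ₄ β₂ β₃ β₄ i t x =
      tumourKinetics α₁ α₂ δ₁ δ₂ δ₄ β₂ β₃ β₄ x + Pi.single 3 (β₄ * i t) := by
  ext j
  fin_cases j <;> simp [tumourField, tumourKinetics]
  ring

theorem contDiff_tumourKinetics : ContDiff ℝ 1 (tumourKinetics α₁ α₂ δ₁ δ₂ δ₄ β₂ β₃ β₄) :=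
  contDiff_pi.2 fun j ↦ by fin_cases j <;> simp [tumourKinetics] <;> fun_prop

theorem continuous_uncurry_tumourField (hi : Continuous i) :
    Continuous (uncurry (tumourField α₁ α₂ δ₁ δ₂ δ₄ β₂ β₃ β₄ i)) := by
  simp only [uncurry_def, tumourField_eq_kinetics_add_single]
  exact (contDiff_tumourKinetics.continuous.comp continuous_snd).add
    ((continuous_single 3).comp (continuous_const.mul (hi.comp continuous_fst)))

theorem exists_lipschitzOnWith_tumourField {s : Set (Fin 4 → ℝ)} (hs : IsCompact s) :
    ∃ K, ∀ t, LipschitzOnWith K (tumourField α₁ α₂ δ₁ δ₂ δ₄ β₂ β₃ β₄ i t) s := by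
  obtain ⟨K, hK⟩ :=
    contDiff_tumourKinetics.locallyLipschitz.locallyLipschitzOn.exists_lipschitzOnWith_of_compact hs
  refine ⟨K, fun t x hx y hy ↦ ?_⟩
  simpa only [tumourField_eq_kinetics_add_single, edist_add_right] using hK hx hy

theorem tumourField_nonneg_of_eq_zero (hβ₃ : 0 ≤ β₃) (hβ₄ : 0 ≤ β₄) {t : ℝ} (hit : 0 ≤ i t)
    {x : Fin 4 → ℝ} (hx : 0 ≤ x) {j : Fin 4} (hj : x j = 0) :
    0 ≤ tumourField α₁ α₂ δ₁ δ₂ δ₄ β₂ β₃ β₄ i t x j := by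
  have := hx 1
  fin_cases j <;> simp_all [tumourField] <;> positivity

theorem tumourField_nonpos_of_eq_bound (hα₁ : 0 ≤ α₁) (hα₂ : 0 ≤ α₂) (hδ₁ : 0 ≤ δ₁)
    (hδ₂ : 0 ≤ δ₂) (hδ₄ : 0 ≤ δ₄) (hβ₂ : 0 ≤ β₂) (hβ₃ : 0 ≤ β₃) (hβ₄ : 0 ≤ β₄)
    {M x : Fin 4 → ℝ} (hM₀ : 1 ≤ M 0) (hM₁ : 1 ≤ M 1) (hM₁₂ : M 1 ≤ M 2) {t : ℝ}
    (hit : i t ≤ M 3) (hx : x ∈ Icc 0 M) {j : Fin 4} (hj : x j = M j) :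
    tumourField α₁ α₂ δ₁ δ₂ δ₄ β₂ β₃ β₄ i t x j ≤ 0 := by
  have h0 := hx.1 0; have h1 := hx.1 1; have h2 := hx.1 2; have h3 := hx.1 3
  fin_cases j <;> simp [tumourField] at hj ⊢
  · exact mul_nonpos_of_nonneg_of_nonpos h0 (by nlinarith [mul_nonneg hα₁ h1, mul_nonneg hδ₁ h2])
  · exact mul_nonpos_of_nonneg_of_nonpos (mul_nonneg hβ₂ h1)
      (by nlinarith [mul_nonneg hα₂ h0, mul_nonneg hδ₂ h3])
  · exact mul_nonpos_of_nonneg_of_nonpos hβ₃ (by linarith [hx.2 1])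
  · exact mul_nonpos_of_nonneg_of_nonpos hβ₄ (by nlinarith [mul_nonneg (mul_nonneg hδ₄ h3) h1])

end TumourModel

theorem full_system_global_existence_uniqueness_general
    (α₁ α₂ δ₁ δ₂ δ₄ β₂ β₃ β₄ iM : ℝ)
    (hα₁ : 0 < α₁) (hα₂ : 0 < α₂) (hδ₁ : 0 < δ₁) (hδ₂ : 0 < δ₂) (hδ₄ : 0 < δ₄)
    (hβ₂ : 0 < β₂) (hβ₃ : 0 < β₃) (hβ₄ : 0 < β₄)
    (i : ℝ → ℝ) (hi : Continuous i) (hirange : ∀ t, 0 ≤ t → i t ∈ Set.Icc 0 iM)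
    (F : ℝ → (Fin 4 → ℝ) → (Fin 4 → ℝ))
    (hF : ∀ t x, F t x =
      ![x 0 * (1 - x 0 - α₁ * x 1 - δ₁ * x 2),
        β₂ * x 1 * (1 - x 1 - α₂ * x 0 - δ₂ * x 3),
        β₃ * (x 1 - x 2),
        β₄ * (i t - x 3 - δ₄ * x 3 * x 1)])
    (u₀ : Fin 4 → ℝ) (hu₀ : ∀ j, 0 ≤ u₀ j) :
    ∃ u : ℝ → (Fin 4 → ℝ),
      u 0 = u₀ ∧
      (∀ t, 0 ≤ t → HasDerivAt u (F t (u t)) t) ∧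
      (∀ t, 0 ≤ t → ∀ j, 0 ≤ u t j) ∧
      (∀ t, 0 ≤ t →
        u t 0 ∈ Set.Icc 0 (max 1 (u₀ 0)) ∧
        u t 1 ∈ Set.Icc 0 (max 1 (u₀ 1)) ∧
        u t 2 ∈ Set.Icc 0 (max 1 (max (u₀ 1) (u₀ 2))) ∧
        u t 3 ∈ Set.Icc 0 (max iM (u₀ 3))) ∧
      (∀ v : ℝ → (Fin 4 → ℝ), v 0 = u₀ →
        (∀ t, 0 ≤ t → ∀ j, 0 ≤ v t j) →
        (∀ t, 0 ≤ t → HasDerivAt v (F t (v t)) t) →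
        ∀ t, 0 ≤ t → v t = u t) := by
  obtain rfl : F = tumourField α₁ α₂ δ₁ δ₂ δ₄ β₂ β₃ β₄ i := funext fun t ↦ funext (hF t)
  let M : Fin 4 → ℝ := ![max 1 (u₀ 0), max 1 (u₀ 1), max 1 (max (u₀ 1) (u₀ 2)), max iM (u₀ 3)]
  have hu₀M : u₀ ∈ Icc 0 M := ⟨hu₀, fun j ↦ by fin_cases j <;> simp [M]⟩
  obtain ⟨u, hu0, hu⟩ := exists_forall_hasDerivAt_mem_Icc (continuous_uncurry_tumourField hi)
    (exists_lipschitzOnWith_tumourField isCompact_Icc)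
    (fun t ht x hx j hj ↦ tumourField_nonneg_of_eq_zero hβ₃.le hβ₄.le (hirange t ht).1 hx.1 hj)
    (fun t ht x hx j hj ↦ tumourField_nonpos_of_eq_bound hα₁.le hα₂.le hδ₁.le hδ₂.le hδ₄.le
      hβ₂.le hβ₃.le hβ₄.le (le_max_left _ _) (le_max_left _ _) (max_le_max le_rfl (le_max_left _ _))
      ((hirange t ht).2.trans (le_max_left _ _)) hx hj) hu₀M
  refine ⟨u, hu0, fun t ht ↦ (hu t ht).1, fun t ht ↦ (hu t ht).2.1, fun t ht ↦ ?_,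
    fun v hv0 _ hv t ht ↦ ?_⟩
  · obtain ⟨hlow, hup⟩ := (hu t ht).2
    exact ⟨⟨hlow 0, hup 0⟩, ⟨hlow 1, hup 1⟩, ⟨hlow 2, hup 2⟩, ⟨hlow 3, hup 3⟩⟩
  · exact ODE_solution_unique_of_isCompact_lipschitzOnWith
      (fun s hs ↦ exists_lipschitzOnWith_tumourField hs) hv (fun t ht ↦ (hu t ht).1)
      (hv0.trans hu0.symm) ht

/-- Global existence, uniqueness, nonnegativity and an invariant compact box for the
full non-dimensionalised tumour–normal-tissue–acid–chemotherapy system. -/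
theorem full_system_global_existence_uniqueness
    (α₁ α₂ δ₁ δ₂ δ₄ β₂ β₃ β₄ iM : ℝ)
    (hα₁ : 0 < α₁) (hα₂ : 0 < α₂) (hδ₁ : 0 < δ₁) (hδ₂ : 0 < δ₂) (hδ₄ : 0 < δ₄)
    (hβ₂ : 0 < β₂) (hβ₃ : 0 < β₃) (hβ₄ : 0 < β₄) (hiM : 0 < iM)
    (i : ℝ → ℝ) (hi : Continuous i) (hirange : ∀ t, 0 ≤ t → i t ∈ Set.Icc 0 iM)
    (F : ℝ → (Fin 4 → ℝ) → (Fin 4 → ℝ))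
    (hF : ∀ t x, F t x =
      ![x 0 * (1 - x 0 - α₁ * x 1 - δ₁ * x 2),
        β₂ * x 1 * (1 - x 1 - α₂ * x 0 - δ₂ * x 3),
        β₃ * (x 1 - x 2),
        β₄ * (i t - x 3 - δ₄ * x 3 * x 1)])
    (u₀ : Fin 4 → ℝ) (hu₀ : ∀ j, 0 ≤ u₀ j) :
    ∃ u : ℝ → (Fin 4 → ℝ),
      u 0 = u₀ ∧
      (∀ t, 0 ≤ t → HasDerivAt u (F t (u t)) t) ∧
      (∀ t, 0 ≤ t → ∀ j, 0 ≤ u t j) ∧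
      (∀ t, 0 ≤ t →
        u t 0 ∈ Set.Icc 0 (max 1 (u₀ 0)) ∧
        u t 1 ∈ Set.Icc 0 (max 1 (u₀ 1)) ∧
        u t 2 ∈ Set.Icc 0 (max 1 (max (u₀ 1) (u₀ 2))) ∧
        u t 3 ∈ Set.Icc 0 (max iM (u₀ 3))) ∧
      (∀ v : ℝ → (Fin 4 → ℝ), v 0 = u₀ →
        (∀ t, 0 ≤ t → ∀ j, 0 ≤ v t j) →
        (∀ t, 0 ≤ t → HasDerivAt v (F t (v t)) t) →
        ∀ t, 0 ≤ t → v t = u t) :=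
  full_system_global_existence_uniqueness_general α₁ α₂ δ₁ δ₂ δ₄ β₂ β₃ β₄ iM hα₁ hα₂ hδ₁ hδ₂ hδ₄ hβ₂
    hβ₃ hβ₄ i hi hirange F hF u₀ hu₀
end
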